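/- arXiv:2311.09863 — 2 statements merged into one kernel-verified Lean document; each statement's English description precedes it below -/
import Mathlib

section
/- If j is a positive zero of J_0, then (1/j^4) ∫_0^j s^5 J_0(s) ds = -j (1 - 8/j^2)^2 J_0'(j). -/
open MeasureTheory Real Filter

noncomputable def besselJ (n : ℕ) (z : ℝ) : ℝ :=
  ∑' k : ℕ, (-1 : ℝ) ^ k / ((Nat.factorial k : ℝ) * (Nat.factorial (n + k) : ℝ)) * (z / 2) ^ (n + 2 * k)

/-!
Termwise differentiation of the power series gives `J₀' = -J₁` and `(t J₁)' = t J₀`.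
Integrating `t⁵ J₀ = t⁴ (t J₁)'` repeatedly by parts with these rules yields the primitive
`(t⁴ - 16 t² + 64) t J₁ + (4 t⁴ - 32 t²) J₀`, whose second summand vanishes at a zero `j` of `J₀`;
since `J₀'(j) = -J₁(j)` and `j⁴ - 16 j² + 64 = (j² - 8)²`, this is the claim.
-/

theorem hasDerivAt_tsum_of_locally_bounded {𝕜 F : Type*} [RCLike 𝕜] [NormedAddCommGroup F]
    [CompleteSpace F] [NormedSpace 𝕜 F] {f f' : ℕ → 𝕜 → F}
    (hf : ∀ k t, HasDerivAt (f k) (f' k t) t) (hf0 : Summable fun k => f k 0)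
    (hbound : ∀ R : ℝ, ∃ u : ℕ → ℝ, Summable u ∧ ∀ k t, ‖t‖ ≤ R → ‖f' k t‖ ≤ u k) (x : 𝕜) :
    HasDerivAt (fun t => ∑' k, f k t) (∑' k, f' k x) x := by
  obtain ⟨u, hu, hfu⟩ := hbound (‖x‖ + 1)
  exact hasDerivAt_tsum_of_isPreconnected hu Metric.isOpen_ball
    (convex_ball _ _).isPreconnected (fun k t _ => hf k t)
    (fun k t ht => hfu k t (by simpa using (Metric.mem_ball.1 ht).le))
    (Metric.mem_ball_self (by positivity)) hf0 (by simp)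

namespace Bessel

noncomputable def term (n k : ℕ) (z : ℝ) : ℝ :=
  (-1 : ℝ) ^ k / ((k.factorial : ℝ) * ((n + k).factorial : ℝ)) * (z / 2) ^ (n + 2 * k)

theorem besselJ_eq_tsum_term (n : ℕ) (z : ℝ) : besselJ n z = ∑' k, term n k z := rfl

noncomputable def majorant (n : ℕ) (R : ℝ) (k : ℕ) : ℝ :=
  (R / 2) ^ n * ((R / 2) ^ 2) ^ k / k.factorial

theorem summable_majorant (n : ℕ) (R : ℝ) : Summable (majorant n R) :=
  ((Real.summable_pow_div_factorial ((R / 2) ^ 2)).mul_left ((R / 2) ^ n)).congr fun _ =>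
    (mul_div_assoc ..).symm

theorem abs_term_le {n k : ℕ} {z R : ℝ} (hz : |z| ≤ R) : |term n k z| ≤ majorant n R k := by
  have hz2 : |z / 2| ≤ R / 2 := by rw [abs_div, abs_two]; linarith
  have hfac : (k.factorial : ℝ) ≤ k.factorial * (n + k).factorial :=
    le_mul_of_one_le_right (by positivity) (by exact_mod_cast (n + k).factorial_pos)
  calc |term n k z| = |z / 2| ^ n * (|z / 2| ^ 2) ^ k / (k.factorial * (n + k).factorial) := by
        simp only [term, abs_mul, abs_div, abs_pow, abs_neg, abs_one, one_pow, pow_add, pow_mul,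
          Nat.abs_cast]
        ring
    _ ≤ (R / 2) ^ n * ((R / 2) ^ 2) ^ k / k.factorial := by
        have hR : 0 ≤ R / 2 := (abs_nonneg _).trans hz2
        gcongr

theorem summable_term (n : ℕ) (z : ℝ) : Summable (term n · z) :=
  .of_norm_bounded (summable_majorant n |z|) fun _ => abs_term_le le_rfl

theorem hasDerivAt_term (n k : ℕ) (x : ℝ) :
    HasDerivAt (term n k)
      ((-1 : ℝ) ^ k / ((k.factorial : ℝ) * ((n + k).factorial : ℝ)) *
        ((n + 2 * k : ℕ) * (x / 2) ^ (n + 2 * k - 1) * (1 / 2))) x :=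
  (((hasDerivAt_id' x).div_const 2).pow _).const_mul _

theorem hasDerivAt_term_zero_succ (k : ℕ) (x : ℝ) :
    HasDerivAt (term 0 (k + 1)) (-term 1 k x) x := by
  refine (hasDerivAt_term 0 (k + 1) x).congr_deriv ?_
  rw [show 0 + 2 * (k + 1) - 1 = 1 + 2 * k by omega]
  simp only [term, Nat.factorial_succ, zero_add, Nat.add_comm 1 k]
  push_cast
  field_simp
  ring

theorem hasDerivAt_pow_mul_term_succ (n k : ℕ) (x : ℝ) :
    HasDerivAt (fun t => t ^ (n + 1) * term (n + 1) k t) (x ^ (n + 1) * term n k x) x := by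
  refine ((hasDerivAt_pow (n + 1) x).mul (hasDerivAt_term (n + 1) k x)).congr_deriv ?_
  rw [show n + 1 + 2 * k - 1 = n + 2 * k by omega, Nat.add_sub_cancel]
  simp only [term, Nat.add_right_comm n 1 k, Nat.factorial_succ]
  push_cast
  field_simp
  ring
end Bessel

open Bessel

theorem hasDerivAt_besselJ_zero (x : ℝ) : HasDerivAt (besselJ 0) (-besselJ 1 x) x := by
  have hshift : besselJ 0 = fun t => 1 + ∑' k, term 0 (k + 1) t := by
    ext t
    rw [besselJ_eq_tsum_term, (summable_term 0 t).tsum_eq_zero_add]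
    simp [term]
  have hseries := hasDerivAt_tsum_of_locally_bounded (f := fun k => term 0 (k + 1))
    (f' := fun k t => -term 1 k t) hasDerivAt_term_zero_succ
    ((summable_nat_add_iff (f := (term 0 · 0)) 1).2 (summable_term 0 0))
    (fun R => ⟨majorant 1 R, summable_majorant 1 R, fun k t ht => by
      rw [norm_neg]; exact abs_term_le ht⟩) x
  rw [hshift, besselJ_eq_tsum_term, ← tsum_neg]
  exact hseries.const_add 1

theorem hasDerivAt_pow_mul_besselJ_succ (n : ℕ) (x : ℝ) :
    HasDerivAt (fun t => t ^ (n + 1) * besselJ (n + 1) t) (x ^ (n + 1) * besselJ n x) x := by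
  have hseries := hasDerivAt_tsum_of_locally_bounded
    (f := fun k t => t ^ (n + 1) * term (n + 1) k t) (f' := fun k t => t ^ (n + 1) * term n k t)
    (hasDerivAt_pow_mul_term_succ n)
    ((summable_term (n + 1) 0).mul_left _)
    (fun R => ⟨fun k => R ^ (n + 1) * majorant n R k, (summable_majorant n R).mul_left _,
      fun k t ht => by
        rw [norm_mul, norm_pow]
        exact mul_le_mul (pow_le_pow_left₀ (norm_nonneg t) ht _) (abs_term_le ht) (abs_nonneg _)
          (pow_nonneg ((norm_nonneg t).trans ht) _)⟩) x
  simpa only [besselJ_eq_tsum_term, ← tsum_mul_left] using hseries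

theorem continuous_besselJ_zero : Continuous (besselJ 0) :=
  continuous_iff_continuousAt.2 fun x => (hasDerivAt_besselJ_zero x).continuousAt

theorem integral_pow_five_mul_besselJ_zero (a : ℝ) :
    ∫ s in (0 : ℝ)..a, s ^ 5 * besselJ 0 s =
      (a ^ 4 - 16 * a ^ 2 + 64) * (a * besselJ 1 a) + (4 * a ^ 4 - 32 * a ^ 2) * besselJ 0 a := by
  have hprimitive : ∀ s : ℝ, HasDerivAt (fun t =>
      (t ^ 4 - 16 * t ^ 2 + 64) * (t * besselJ 1 t) + (4 * t ^ 4 - 32 * t ^ 2) * besselJ 0 t)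
      (s ^ 5 * besselJ 0 s) s := by
    intro s
    have h1 := hasDerivAt_pow_mul_besselJ_succ 0 s
    simp only [zero_add, pow_one] at h1
    have hp : HasDerivAt (fun t : ℝ => t ^ 4 - 16 * t ^ 2 + 64) (4 * s ^ 3 - 32 * s) s := by
      refine (((hasDerivAt_pow 4 s).sub ((hasDerivAt_pow 2 s).const_mul 16)).add_const
        64).congr_deriv ?_
      push_cast; ring
    have hq : HasDerivAt (fun t : ℝ => 4 * t ^ 4 - 32 * t ^ 2) (16 * s ^ 3 - 64 * s) s := by
      refine (((hasDerivAt_pow 4 s).const_mul 4).sub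
        ((hasDerivAt_pow 2 s).const_mul 32)).congr_deriv ?_
      push_cast; ring
    refine ((hp.mul h1).add (hq.mul (hasDerivAt_besselJ_zero s))).congr_deriv ?_
    ring
  rw [intervalIntegral.integral_eq_sub_of_hasDerivAt (fun s _ => hprimitive s)
    (((continuous_pow 5).mul continuous_besselJ_zero).intervalIntegrable _ _)]
  simp

theorem integral_fifth_besselJ_zero_general (j : ℝ) (hzero : besselJ 0 j = 0) :
    (1 / j ^ 4) * ∫ s in (0 : ℝ)..j, s ^ 5 * besselJ 0 s
      = -(j * (1 - 8 / j ^ 2) ^ 2 * deriv (besselJ 0) j) := by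
  rw [integral_pow_five_mul_besselJ_zero, hzero, (hasDerivAt_besselJ_zero j).deriv]
  rcases eq_or_ne j 0 with rfl | hj
  · simp
  · field_simp
    ring

theorem integral_fifth_besselJ_zero (j : ℝ) (hj : 0 < j) (hzero : besselJ 0 j = 0) :
    (1 / j ^ 4) * ∫ s in (0 : ℝ)..j, s ^ 5 * besselJ 0 s
      = -(j * (1 - 8 / j ^ 2) ^ 2 * deriv (besselJ 0) j) :=
  integral_fifth_besselJ_zero_general j hzero
end

section
/- Let λ_n = j_n^2 / (4(1-a_1)) and μ_n = j_n^2 / (4(1-a_2)) with 0 < a_1 < a_2 < 1, and let c_n, d_n be real sequences with c_1 ≠ 0 and Σ |c_n| e^{-λ_n t} < ∞, Σ |d_n| e^{-μ_n t} < ∞ for all t > t_1. If Σ_n c_n e^{-λ_n t} = Σ_n d_n e^{-μ_n t} for all t > t_1, then taking t → ∞ yields a contradiction; hence no such equality can hold with c_1 ≠ 0. In particular a_1 < a_2 is impossible when the two exponential series coincide on (t_1, ∞) and the first coefficient c_1 is nonzero. -/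
open MeasureTheory Real Filter Topology

/-!
Multiplying both series by `exp (λ₁ t)` and letting `t → ∞`, dominated convergence picks out the
coefficients whose exponent equals `λ₁`. Since `λ₁ < λ_n` for `n ≥ 2` and `λ₁ < λ_n < μ_n` for all
`n`, the left-hand side tends to `c₁ ≠ 0` and the right-hand side to `0`.
-/

theorem tendsto_exp_sub_mul_atTop {σ ν : ℝ} (h : σ ≤ ν) :
    Tendsto (fun t => exp ((σ - ν) * t)) atTop (𝓝 (if ν = σ then 1 else 0)) := by
  rcases h.eq_or_lt with rfl | hlt
  · simp
  · rw [if_neg hlt.ne']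
    exact tendsto_exp_atBot.comp (tendsto_id.const_mul_atTop_of_neg (sub_neg.2 hlt))

theorem tendsto_exp_mul_tsum_mul_exp_neg {ι : Type*} {f ν : ι → ℝ} {σ t₀ : ℝ}
    (hν : ∀ i, σ ≤ ν i) (hf : Summable fun i => |f i| * exp (-ν i * t₀)) :
    Tendsto (fun t => exp (σ * t) * ∑' i, f i * exp (-ν i * t)) atTop
      (𝓝 (∑' i, if ν i = σ then f i else 0)) := by
  have hshift : ∀ a t i, exp (σ * t) * (a * exp (-ν i * t)) = a * exp ((σ - ν i) * t) := by
    intro a t i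
    rw [mul_left_comm, ← exp_add]
    ring_nf
  simp_rw [← tsum_mul_left, hshift]
  refine tendsto_tsum_of_dominated_convergence (bound := fun i => |f i| * exp ((σ - ν i) * t₀))
    ?_ (fun i => ?_) ?_
  · simpa only [hshift] using hf.mul_left (exp (σ * t₀))
  · simpa using (tendsto_exp_sub_mul_atTop (hν i)).const_mul (f i)
  · filter_upwards [eventually_ge_atTop t₀] with t ht i
    rw [norm_mul, norm_eq_abs, norm_of_nonneg (exp_pos _).le]
    exact mul_le_mul_of_nonneg_left
      (exp_le_exp.2 (mul_le_mul_of_nonpos_left ht (sub_nonpos.2 (hν i)))) (abs_nonneg _)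

theorem no_coincidence_of_exponential_series_general
    (j : ℕ → ℝ) (hmono : StrictMono j) (hpos : ∀ n, 0 < j n)
    (a₁ a₂ t₁ : ℝ) (ha : a₁ < a₂) (ha₂ : a₂ < 1)
    (c d : ℕ → ℝ) (hc₁ : c 0 ≠ 0)
    (hcsum : ∀ t > t₁, Summable fun n : ℕ => |c n| * Real.exp (-(j n ^ 2 / (4 * (1 - a₁))) * t))
    (hdsum : ∀ t > t₁, Summable fun n : ℕ => |d n| * Real.exp (-(j n ^ 2 / (4 * (1 - a₂))) * t)) :
    ¬ (∀ t > t₁,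
        ∑' n : ℕ, c n * Real.exp (-(j n ^ 2 / (4 * (1 - a₁))) * t)
          = ∑' n : ℕ, d n * Real.exp (-(j n ^ 2 / (4 * (1 - a₂))) * t)) := by
  intro heq
  set lam : ℕ → ℝ := fun n => j n ^ 2 / (4 * (1 - a₁))
  set mu : ℕ → ℝ := fun n => j n ^ 2 / (4 * (1 - a₂))
  have hlam : StrictMono lam :=
    StrictMono.div_const (fun m n hmn => pow_lt_pow_left₀ (hmono hmn) (hpos m).le two_ne_zero)
      (by linarith)
  have hlam_mu : ∀ n, lam n < mu n := fun n =>
    div_lt_div_of_pos_left (pow_pos (hpos n) 2) (by linarith) (by linarith)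
  have hlam_zero : ∀ n, lam 0 ≤ lam n := fun n => hlam.monotone n.zero_le
  have hC := tendsto_exp_mul_tsum_mul_exp_neg hlam_zero (hcsum (t₁ + 1) (by linarith))
  have hD := tendsto_exp_mul_tsum_mul_exp_neg (fun n => (hlam_zero n).trans (hlam_mu n).le)
    (hdsum (t₁ + 1) (by linarith))
  rw [tsum_eq_single 0 fun n hn => if_neg (hlam.injective.ne hn), if_pos rfl] at hC
  simp only [fun n => (hlam_zero n).trans_lt (hlam_mu n) |>.ne', if_false, tsum_zero] at hD
  refine hc₁ (tendsto_nhds_unique (hC.congr' ?_) hD)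
  filter_upwards [eventually_gt_atTop t₁] with t ht
  rw [heq t ht]

theorem no_coincidence_of_exponential_series
    (j : ℕ → ℝ) (hmono : StrictMono j) (hpos : ∀ n, 0 < j n)
    (hzero : ∀ n, besselJ 0 (j n) = 0)
    (a₁ a₂ t₁ : ℝ) (ha₁ : 0 < a₁) (ha : a₁ < a₂) (ha₂ : a₂ < 1) (ht₁ : 0 < t₁)
    (c d : ℕ → ℝ) (hc₁ : c 0 ≠ 0)
    (hcsum : ∀ t > t₁, Summable fun n : ℕ => |c n| * Real.exp (-(j n ^ 2 / (4 * (1 - a₁))) * t))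
    (hdsum : ∀ t > t₁, Summable fun n : ℕ => |d n| * Real.exp (-(j n ^ 2 / (4 * (1 - a₂))) * t)) :
    ¬ (∀ t > t₁,
        ∑' n : ℕ, c n * Real.exp (-(j n ^ 2 / (4 * (1 - a₁))) * t)
          = ∑' n : ℕ, d n * Real.exp (-(j n ^ 2 / (4 * (1 - a₂))) * t)) :=
  no_coincidence_of_exponential_series_general j hmono hpos a₁ a₂ t₁ ha ha₂ c d hc₁ hcsum hdsum
end
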